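/- arXiv:1403.3914 — 2 statements merged into one kernel-verified Lean document; each statement's English description precedes it below -/
import Mathlib

section
/- Let A be a commutative ring, M an A-module, and τ : M → M an A-linear automorphism such that the A-subalgebra B of End_A(M) generated by τ and τ^{-1} is finitely generated as an A-module. Then τ satisfies a Laurent polynomial relation c₀ + c₁τ + ⋯ + c_{d-1}τ^{d-1} + τ^d = 0 combined with a relation for τ^{-1}, yielding a monic polynomial relation for τ whose constant coefficient is a unit of A; equivalently, there exist d ≥ 1 and a₀,…,a_{d-1} ∈ A with a₀ ∈ A^× such that τ^d = a_{d-1}τ^{d-1} + ⋯ + a₁τ + a₀. -/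
/-!
If `τ` is invertible and both `τ` and `τ⁻¹` are integral, say `f(τ) = 0` and `g(τ⁻¹) = 0`
with `f`, `g` monic, then the reversal of `g` kills `τ` and has constant term `1`. Adding it to
`X ^ (deg g + 1) * f`, which also kills `τ`, has constant term `0` and larger degree, gives a
monic relation for `τ` with constant term `1`. Both `τ` and `τ⁻¹` are integral because they
live in the module-finite algebra `B`, which is commutative since `τ` and `τ⁻¹` commute.
-/

open Polynomial

theorem Polynomial.Monic.pow_natDegree_eq_sum {A R : Type*} [CommRing A] [Ring R] [Algebra A R]
    {p : A[X]} (hp : p.Monic) {x : R} (hx : aeval x p = 0) :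
    x ^ p.natDegree = ∑ i ∈ Finset.range p.natDegree, -p.coeff i • x ^ i := by
  rw [aeval_eq_sum_range, Finset.sum_range_succ, hp.coeff_natDegree, one_smul] at hx
  simp only [neg_smul, Finset.sum_neg_distrib]
  exact eq_neg_of_add_eq_zero_right hx

theorem aeval_reverse_eq_zero_of_aeval_invOf {A S : Type*} [CommRing A] [CommRing S]
    [Algebra A S] {x : S} [Invertible x] {g : A[X]} (hg : aeval (⅟x) g = 0) :
    aeval x g.reverse = 0 := by
  let := invertibleInvOf (a := x)
  rw [aeval_def, ← invOf_invOf x, eval₂_reverse_eq_zero_iff]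
  exact hg

theorem exists_monic_coeff_zero_eq_one_of_isIntegral_invOf {A S : Type*} [CommRing A]
    [Nontrivial A] [CommRing S] [Algebra A S] {x : S} [Invertible x] (hx : IsIntegral A x)
    (hx' : IsIntegral A (⅟x)) :
    ∃ p : A[X], p.Monic ∧ 0 < p.natDegree ∧ p.coeff 0 = 1 ∧ aeval x p = 0 := by
  obtain ⟨f, hf, hfx⟩ := hx
  obtain ⟨g, hg, hgx⟩ := hx'
  have hq : (X ^ (g.natDegree + 1) * f).Monic := (monic_X_pow _).mul hf
  have hdeg : (X ^ (g.natDegree + 1) * f).natDegree = g.natDegree + 1 + f.natDegree := by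
    rw [(monic_X_pow _).natDegree_mul hf, natDegree_X_pow]
  have hlt : g.reverse.degree < (X ^ (g.natDegree + 1) * f).degree := by
    rw [degree_eq_natDegree hq.ne_zero, hdeg]
    exact (degree_le_natDegree.trans (Nat.cast_le.mpr g.reverse_natDegree_le)).trans_lt
      (Nat.cast_lt.mpr (by omega))
  refine ⟨X ^ (g.natDegree + 1) * f + g.reverse, hq.add_of_left hlt, ?_, ?_, ?_⟩
  · rw [natDegree_add_eq_left_of_degree_lt hlt, hdeg]; omega
  · rw [coeff_add, coeff_X_pow_mul', coeff_zero_reverse, hg.leadingCoeff]; simp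
  · rw [map_add, map_mul, aeval_def x f, hfx, mul_zero, zero_add]
    exact aeval_reverse_eq_zero_of_aeval_invOf hgx

/-- if the subalgebra of `End_A(M)` generated by an automorphism `τ` and
its inverse is module-finite over `A`, then `τ` satisfies a monic polynomial relation
whose constant coefficient is a unit. -/
theorem stmt3 (A : Type*) [CommRing A] (M : Type*) [AddCommGroup M] [Module A M]
    (τ : M ≃ₗ[A] M)
    (hB : Module.Finite A
      (Algebra.adjoin A ({τ.toLinearMap, τ.symm.toLinearMap} : Set (Module.End A M)))) :
    ∃ d : ℕ, 1 ≤ d ∧ ∃ a : ℕ → A, IsUnit (a 0) ∧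
      (τ.toLinearMap : Module.End A M) ^ d =
        ∑ i ∈ Finset.range d, a i • (τ.toLinearMap : Module.End A M) ^ i := by
  rcases subsingleton_or_nontrivial A with _ | _
  · have : Subsingleton M := Module.subsingleton A M
    exact ⟨1, le_rfl, 0, isUnit_of_subsingleton _, Subsingleton.elim _ _⟩
  set B := Algebra.adjoin A ({τ.toLinearMap, τ.symm.toLinearMap} : Set (Module.End A M))
  have hτ_mul : τ.toLinearMap * τ.symm.toLinearMap = 1 := by ext; simp
  have hτ_mul' : τ.symm.toLinearMap * τ.toLinearMap = 1 := by ext; simp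
  have : IsMulCommutative B := Algebra.isMulCommutative_adjoin A (by simp [hτ_mul, hτ_mul'])
  let t : B := ⟨τ.toLinearMap, Algebra.subset_adjoin (by simp)⟩
  let : Invertible t := ⟨⟨τ.symm.toLinearMap, Algebra.subset_adjoin (by simp)⟩,
    Subtype.ext hτ_mul', Subtype.ext hτ_mul⟩
  obtain ⟨p, hp, hdeg, hp0, hpt⟩ := open scoped IsMulCommutative in
    exists_monic_coeff_zero_eq_one_of_isIntegral_invOf (.of_finite A t) (.of_finite A (⅟t))
  have hpτ : aeval (τ.toLinearMap : Module.End A M) p = 0 := by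
    rw [show (τ.toLinearMap : Module.End A M) = B.val t from rfl, aeval_algHom_apply, hpt,
      map_zero]
  exact ⟨p.natDegree, hdeg, fun i ↦ -p.coeff i, by simp [hp0], hp.pow_natDegree_eq_sum hpτ⟩
end

section
/- Let A be a commutative local ring with maximal ideal m, and let M be a submodule of a direct sum ⊕_{i∈I} N_i of finitely generated A-modules N_i, such that M = ⊕_{i∈I} M_i with each M_i ⊆ N_i. If M/mM is finitely generated over A/m, then M is finitely generated over A. -/
/-!
Lift generators of `M/mM` to a finite set `s ⊆ M`, so that `M = span s + mM`. Projecting to the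
`i`-th summand gives `Mᵢ = πᵢ(span s) + m Mᵢ`. For the cofinitely many `i` outside the supports of
the elements of `s` this says `Mᵢ = m Mᵢ`, and `Mᵢ ⊆ Nᵢ` is finitely generated since `A` is
Noetherian, so `Mᵢ = 0` by Nakayama. Hence `M` is the finite sum of the finitely generated `Mᵢ`.
-/

open DirectSum

theorem Submodule.exists_finite_span_sup_eq_top {R M : Type*} [Ring R] [AddCommGroup M]
    [Module R M] (p : Submodule R M) [Module.Finite R (M ⧸ p)] :
    ∃ s : Set M, s.Finite ∧ span R s ⊔ p = ⊤ := by
  obtain ⟨n, v, hv⟩ := Module.Finite.exists_fin (R := R) (M := M ⧸ p)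
  choose lift hlift using p.mkQ_surjective
  refine ⟨Set.range (lift ∘ v), Set.finite_range _, ?_⟩
  rw [sup_comm, ← map_mkQ_eq_top, map_span, ← Set.range_comp, ← hv]
  congr! 2
  exact funext fun i => hlift (v i)

theorem LinearMap.range_eq_bot_of_sup_smul_eq_top {R M P : Type*} [CommRing R]
    [AddCommGroup M] [Module R M] [AddCommGroup P] [Module R P] {I : Ideal R}
    (hI : I ≤ Ideal.jacobson ⊥) {S : Submodule R M} (hS : S ⊔ I • ⊤ = ⊤)
    (f : M →ₗ[R] P) (hf : S ≤ ker f) (hfg : (range f).FG) : range f = ⊥ := by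
  refine Submodule.eq_bot_of_le_smul_of_le_jacobson_bot I _ hfg (le_of_eq ?_) hI
  calc range f = (S ⊔ I • ⊤).map f := by rw [hS, Submodule.map_top]
    _ = I • range f := by
      rw [Submodule.map_sup, le_ker_iff_map.mp hf, bot_sup_eq, Submodule.map_smul'',
        Submodule.map_top]

namespace DirectSum

variable {A ι : Type*} [CommRing A] {N : ι → Type*} [∀ i, AddCommGroup (N i)]
  [∀ i, Module A (N i)] {Mi : ∀ i, Submodule A (N i)} {M : Submodule A (⨁ i, N i)}

theorem map_lof_le_of_forall_mem_iff [DecidableEq ι] (hM : ∀ x, x ∈ M ↔ ∀ i, x i ∈ Mi i)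
    (i : ι) : (Mi i).map (lof A ι N i) ≤ M := by
  rintro _ ⟨y, hy, rfl⟩
  rw [hM]
  intro j
  by_cases h : j = i
  · subst h
    simpa using hy
  · rw [lof_eq_of, of_eq_of_ne i j y h]
    exact (Mi j).zero_mem

theorem range_component_comp_subtype_of_forall_mem_iff
    (hM : ∀ x, x ∈ M ↔ ∀ i, x i ∈ Mi i) (i : ι) :
    LinearMap.range ((component A ι N i).comp M.subtype) = Mi i := by
  classical
  refine le_antisymm ?_ fun y hy => ?_
  · rintro _ ⟨x, rfl⟩
    exact (hM x).mp x.2 i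
  · exact ⟨⟨lof A ι N i y, map_lof_le_of_forall_mem_iff hM i ⟨y, hy, rfl⟩⟩, lof_apply A i y⟩

theorem fg_of_forall_mem_iff (hM : ∀ x, x ∈ M ↔ ∀ i, x i ∈ Mi i) (hfg : ∀ i, (Mi i).FG)
    (hfin : {i | Mi i ≠ ⊥}.Finite) : M.FG := by
  classical
  suffices M = ⨆ i ∈ hfin.toFinset, (Mi i).map (lof A ι N i) by
    rw [this]
    exact Submodule.fg_biSup _ _ fun i _ => (hfg i).map _
  refine le_antisymm (fun x hx => ?_) (iSup₂_le fun i _ => map_lof_le_of_forall_mem_iff hM i)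
  rw [← sum_support_of x]
  refine Submodule.sum_mem _ fun i _ => ?_
  have hxi : x i ∈ Mi i := (hM x).mp hx i
  by_cases hi : Mi i = ⊥
  · rw [hi, Submodule.mem_bot] at hxi
    simp [hxi]
  · exact Submodule.mem_iSup_of_mem i <| Submodule.mem_iSup_of_mem (by simpa using hi)
      ⟨x i, hxi, rfl⟩

end DirectSum

theorem stmt7_general (A : Type*) [CommRing A] [IsLocalRing A] [IsNoetherianRing A]
    (ι : Type*) (N : ι → Type*)
    [∀ i, AddCommGroup (N i)] [∀ i, Module A (N i)] [∀ i, Module.Finite A (N i)]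
    (Mi : ∀ i, Submodule A (N i))
    (M : Submodule A (⨁ i, N i))
    (hM : ∀ x : ⨁ i, N i, x ∈ M ↔ ∀ i, x i ∈ Mi i)
    (hfg : Module.Finite A
      (↥M ⧸ (IsLocalRing.maximalIdeal A • (⊤ : Submodule A ↥M)))) :
    Module.Finite A ↥M := by
  obtain ⟨s, hs, hspan⟩ := Submodule.exists_finite_span_sup_eq_top
    (IsLocalRing.maximalIdeal A • (⊤ : Submodule A ↥M))
  have hMi : ∀ i, (Mi i).FG := fun i => IsNoetherian.noetherian (Mi i)
  have hvanish : ∀ i, (∀ x ∈ s, (x : ⨁ i, N i) i = 0) → Mi i = ⊥ := fun i hi => by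
    have hrange := range_component_comp_subtype_of_forall_mem_iff hM i
    rw [← hrange]
    exact LinearMap.range_eq_bot_of_sup_smul_eq_top
      (IsLocalRing.jacobson_eq_maximalIdeal ⊥ bot_ne_top).ge hspan _
      (Submodule.span_le.mpr hi) (hrange ▸ hMi i)
  have hsupport : {i | Mi i ≠ ⊥} ⊆ ⋃ x ∈ s, {i | (x : ⨁ i, N i) i ≠ 0} := fun i hi => by
    contrapose! hi
    simpa using hvanish i (by simpa using hi)
  exact Module.Finite.iff_fg.mpr <| fg_of_forall_mem_iff hM hMi <|
    (hs.biUnion fun x _ => DFinsupp.finite_support _).subset hsupport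

/-- Nakayama-type lemma of Emerton–Helm: over a Noetherian local ring `A`,
a submodule `M = ⊕ Mᵢ` of a direct sum `⊕ Nᵢ` of finitely generated modules with
`M/mM` finitely generated is itself finitely generated. -/
theorem stmt7 (A : Type*) [CommRing A] [IsLocalRing A] [IsNoetherianRing A]
    (ι : Type*) [DecidableEq ι] (N : ι → Type*)
    [∀ i, AddCommGroup (N i)] [∀ i, Module A (N i)] [∀ i, Module.Finite A (N i)]
    (Mi : ∀ i, Submodule A (N i))
    (M : Submodule A (⨁ i, N i))
    (hM : ∀ x : ⨁ i, N i, x ∈ M ↔ ∀ i, x i ∈ Mi i)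
    (hfg : Module.Finite A
      (↥M ⧸ (IsLocalRing.maximalIdeal A • (⊤ : Submodule A ↥M)))) :
    Module.Finite A ↥M :=
  stmt7_general A ι N Mi M hM hfg
end
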